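/- Let 1 < p ≤ q ≤ ∞. Suppose the delay system ẋ(t) = f(x_t) is forward complete on C⁰ and there exists σ ∈ KL such that ‖φ(t,x₀)‖_{C^{0,1−1/p}} ≤ σ(‖x₀‖_{C^{0,1−1/p}}, t) for all t ≥ 0 and all x₀ ∈ C^{0,1−1/p}. Then there exists ω ∈ KL such that ‖φ(t,x₀)‖_{C^{0,1−1/q}} ≤ ω(‖x₀‖_{C^{0,1−1/q}}, t) for all t ≥ 0 and all x₀ ∈ C^{0,1−1/q}. -/

import Mathlib

open Set MeasureTheory Filter Topology
open scoped ENNReal NNReal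

noncomputable section

abbrev Vec (n : ℕ) := EuclideanSpace ℝ (Fin n)

variable {n : ℕ}

/-- The segment `x_t` of a history `x : ℝ → ℝⁿ`, i.e. `x_t(s) = x(t+s)`
(only its values on `[-r,0]` are relevant). -/
def seg (r : ℝ) (x : ℝ → Vec n) (t : ℝ) : ℝ → Vec n := fun s => x (t + s)

/-- Sup norm over `[-r,0]`. -/
def supN (r : ℝ) (g : ℝ → Vec n) : ℝ := sSup ((fun s => ‖g s‖) '' Icc (-r) 0)

/-- Membership in `C⁰ = C([-r,0];ℝⁿ)`. -/
def MemC0 (r : ℝ) (g : ℝ → Vec n) : Prop := ContinuousOn g (Icc (-r) 0)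

/-- `f` vanishes at `0`, depends only on the values of its argument on `[-r,0]`,
and is Lipschitz on bounded subsets of `C⁰` with a nondecreasing (nonnegative)
modulus `L`. -/
def GoodRHS (r : ℝ) (f : (ℝ → Vec n) → Vec n) (L : ℝ → ℝ) : Prop :=
  f 0 = 0 ∧
  (∀ x y : ℝ → Vec n, EqOn x y (Icc (-r) 0) → f x = f y) ∧
  Monotone L ∧ (∀ s : ℝ, 0 ≤ L s) ∧
  ∀ R : ℝ, ∀ x y : ℝ → Vec n, MemC0 r x → MemC0 r y → supN r x ≤ R → supN r y ≤ R →
    ‖f x - f y‖ ≤ L R * supN r (x - y)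

/-- `x : ℝ → ℝⁿ` is a solution on `[-r, b)` (with `b ∈ (0,∞]` an extended
nonnegative real) of the delay system `ẋ(t) = f(x_t)` with initial condition `x0`:
it is continuous on `[-r,b)`, coincides with `x0` on `[-r,0]`, and satisfies the
integral equation `x(t) = x(0) + ∫₀ᵗ f(x_s) ds` on `[0,b)`. -/
def IsSol (r : ℝ) (f : (ℝ → Vec n) → Vec n) (x0 x : ℝ → Vec n) (b : ℝ≥0∞) : Prop :=
  ContinuousOn x {t : ℝ | -r ≤ t ∧ ENNReal.ofReal t < b} ∧
  EqOn x x0 (Icc (-r) 0) ∧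
  ∀ t : ℝ, 0 ≤ t → ENNReal.ofReal t < b → x t = x 0 + ∫ s in (0:ℝ)..t, f (seg r x s)

/-- Class `KL` functions `σ : [0,∞)×[0,∞) → [0,∞)`. -/
def ClassKL (σ : ℝ → ℝ → ℝ) : Prop :=
  (∀ s t : ℝ, 0 ≤ s → 0 ≤ t → 0 ≤ σ s t) ∧
  (∀ t : ℝ, 0 ≤ t →
    ContinuousOn (fun s => σ s t) (Ici 0) ∧ StrictMonoOn (fun s => σ s t) (Ici 0) ∧
      σ 0 t = 0) ∧
  (∀ s : ℝ, 0 ≤ s →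
    AntitoneOn (fun t => σ s t) (Ici 0) ∧ Tendsto (fun t => σ s t) atTop (nhds 0))

/-- Class `K∞` functions `a : [0,∞) → [0,∞)`. -/
def ClassKInf (a : ℝ → ℝ) : Prop :=
  (∀ s : ℝ, 0 ≤ s → 0 ≤ a s) ∧ ContinuousOn a (Ici 0) ∧ StrictMonoOn a (Ici 0) ∧
  a 0 = 0 ∧ Tendsto a atTop atTop

/-- The set of Hölder difference quotients `‖g t - g s‖ / |t-s|^α` over a set `S`. -/
def hRatios (α : ℝ) (S : Set ℝ) (g : ℝ → Vec n) : Set ℝ :=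
  {c | ∃ t ∈ S, ∃ s ∈ S, t ≠ s ∧ c = ‖g t - g s‖ / |t - s| ^ α}

/-- Membership in the Hölder space `C^{0,α}([-r,0])`. -/
def MemHol (r α : ℝ) (g : ℝ → Vec n) : Prop :=
  MemC0 r g ∧ BddAbove (hRatios α (Icc (-r) 0) g)

/-- The Hölder norm `max(‖g‖_∞, [g]_α)`. -/
def holderNorm (r α : ℝ) (g : ℝ → Vec n) : ℝ :=
  max (supN r g) (sSup (hRatios α (Icc (-r) 0) g))

/-- Membership in the Sobolev space `W^{1,p}([-r,0])`: `g` is absolutely continuous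
on `[-r,0]` (i.e. the integral of an integrable function `d`, which is then its a.e.
derivative) with `d ∈ L^p((-r,0))`. -/
def MemW (r : ℝ) (p : ℝ≥0∞) (g : ℝ → Vec n) : Prop :=
  ∃ d : ℝ → Vec n, IntegrableOn d (Icc (-r) 0) ∧
    eLpNorm d p (volume.restrict (Ioo (-r) 0)) < ⊤ ∧
    ∀ t ∈ Icc (-r) 0, g t = g (-r) + ∫ s in (-r)..t, d s

/-- The Sobolev norm `‖g‖_∞ + ‖ġ‖_p`; for an absolutely continuous `g` the a.e.
derivative coincides a.e. on `(-r,0)` with `deriv g`. -/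
def sobNorm (r : ℝ) (p : ℝ≥0∞) (g : ℝ → Vec n) : ℝ :=
  supN r g + (eLpNorm (deriv g) p (volume.restrict (Ioo (-r) 0))).toReal

/-- The Hölder exponent `1 - 1/p`, with the convention `1/∞ = 0`. -/
def hexp (p : ℝ≥0∞) : ℝ := 1 - (p.toReal)⁻¹

/-!
Write `α = hexp p ≤ β = hexp q`. Since `C^{0,β}` embeds continuously into `C^{0,α}`, the
hypothesis bounds the sup norm of `x_t` by `σ (C ‖x₀‖_β) t`. The Hölder seminorm of `x_t` is
then recovered from the equation: on `[max (t - r) 0, t]` the segments have sup norm at most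
`R = σ (C ‖x₀‖_β) (max (t - r) 0)`, so `‖ẋ‖ = ‖f x_t‖ ≤ L R * R` there, and a Lipschitz function
on an interval of length `r` is `β`-Hölder with constant `L R * R * r ^ (1 - β)`. The initial
datum contributes its own seminorm only while `t < r`, when the window `[t - r, t]` still meets
`[-r, 0]`; both contributions decay in `t`, which gives the `KL` bound.
-/

lemma supN_nonneg {r : ℝ} {g : ℝ → Vec n} : 0 ≤ supN r g :=
  Real.sSup_nonneg (by rintro _ ⟨u, -, rfl⟩; positivity)

lemma supN_zero {r : ℝ} : supN r (0 : ℝ → Vec n) = 0 :=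
  le_antisymm (Real.sSup_nonpos (by rintro _ ⟨u, -, rfl⟩; simp)) supN_nonneg

lemma supN_le {r M : ℝ} (hr : 0 ≤ r) {g : ℝ → Vec n} (h : ∀ u ∈ Icc (-r) 0, ‖g u‖ ≤ M) :
    supN r g ≤ M :=
  csSup_le ((nonempty_Icc.2 (neg_nonpos.2 hr)).image _) (by rintro _ ⟨u, hu, rfl⟩; exact h u hu)

lemma holderNorm_nonneg {r α : ℝ} {g : ℝ → Vec n} : 0 ≤ holderNorm r α g :=
  le_max_of_le_left supN_nonneg

lemma supN_le_holderNorm {r α : ℝ} {g : ℝ → Vec n} : supN r g ≤ holderNorm r α g :=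
  le_max_left _ _

lemma hRatios_nonempty {r : ℝ} (hr : 0 < r) (α : ℝ) (g : ℝ → Vec n) :
    (hRatios α (Icc (-r) 0) g).Nonempty :=
  ⟨_, 0, right_mem_Icc.2 (by linarith), -r, left_mem_Icc.2 (by linarith), by linarith, rfl⟩

lemma mem_upperBounds_hRatios {α M : ℝ} {S : Set ℝ} {g : ℝ → Vec n}
    (h : ∀ u ∈ S, ∀ v ∈ S, u < v → ‖g v - g u‖ ≤ M * (v - u) ^ α) :
    M ∈ upperBounds (hRatios α S g) := by
  rintro _ ⟨u, hu, v, hv, huv, rfl⟩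
  rcases huv.lt_or_gt with huv | hvu
  · rw [norm_sub_rev, abs_sub_comm, abs_of_pos (sub_pos.2 huv),
      div_le_iff₀ (Real.rpow_pos_of_pos (sub_pos.2 huv) _)]
    exact h u hu v hv huv
  · rw [abs_of_pos (sub_pos.2 hvu), div_le_iff₀ (Real.rpow_pos_of_pos (sub_pos.2 hvu) _)]
    exact h v hv u hu hvu

lemma sSup_hRatios_le {r α M : ℝ} (hr : 0 < r) {g : ℝ → Vec n}
    (h : ∀ u ∈ Icc (-r) 0, ∀ v ∈ Icc (-r) 0, u < v → ‖g v - g u‖ ≤ M * (v - u) ^ α) :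
    sSup (hRatios α (Icc (-r) 0) g) ≤ M :=
  csSup_le (hRatios_nonempty hr α g) (mem_upperBounds_hRatios h)

lemma MemHol.norm_sub_le {r α u v : ℝ} {g : ℝ → Vec n} (hg : MemHol r α g)
    (hu : u ∈ Icc (-r) 0) (hv : v ∈ Icc (-r) 0) (huv : u < v) :
    ‖g v - g u‖ ≤ holderNorm r α g * (v - u) ^ α := by
  have hratio : ‖g v - g u‖ / |v - u| ^ α ≤ holderNorm r α g :=
    (le_csSup hg.2 ⟨v, hv, u, hu, huv.ne', rfl⟩).trans (le_max_right _ _)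
  rwa [abs_of_pos (sub_pos.2 huv), div_le_iff₀ (Real.rpow_pos_of_pos (sub_pos.2 huv) _)] at hratio

lemma MemHol.of_exponent_le {r α β : ℝ} (hr : 0 < r) (hαβ : α ≤ β) {g : ℝ → Vec n}
    (hg : MemHol r β g) :
    MemHol r α g ∧ holderNorm r α g ≤ max 1 (r ^ (β - α)) * holderNorm r β g := by
  set D := max 1 (r ^ (β - α))
  set N := holderNorm r β g
  have hholder : ∀ u ∈ Icc (-r) 0, ∀ v ∈ Icc (-r) 0, u < v →
      ‖g v - g u‖ ≤ D * N * (v - u) ^ α := by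
    intro u hu v hv huv
    have hd : 0 < v - u := sub_pos.2 huv
    have hpow : (v - u) ^ (β - α) ≤ D := by
      rcases le_total (v - u) 1 with h | h
      · exact (Real.rpow_le_one hd.le h (sub_nonneg.2 hαβ)).trans (le_max_left _ _)
      · refine (Real.rpow_le_rpow hd.le ?_ (sub_nonneg.2 hαβ)).trans (le_max_right _ _)
        linarith [hu.1, hv.2]
    calc ‖g v - g u‖ ≤ N * (v - u) ^ β := hg.norm_sub_le hu hv huv
      _ = N * (v - u) ^ (β - α) * (v - u) ^ α := by
        rw [mul_assoc, ← Real.rpow_add hd, sub_add_cancel]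
      _ ≤ N * D * (v - u) ^ α := by gcongr; exact holderNorm_nonneg
      _ = D * N * (v - u) ^ α := by ring
  refine ⟨⟨hg.1, _, mem_upperBounds_hRatios hholder⟩, max_le ?_ (sSup_hRatios_le hr hholder)⟩
  calc supN r g ≤ N := supN_le_holderNorm
    _ ≤ D * N := le_mul_of_one_le_left holderNorm_nonneg (le_max_left _ _)

lemma hexp_le_hexp {p q : ℝ≥0∞} (hp : p ≠ 0) (hpq : p ≤ q) : hexp p ≤ hexp q := by
  have : q⁻¹.toReal ≤ p⁻¹.toReal := ENNReal.toReal_mono (ENNReal.inv_ne_top.2 hp)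
    (ENNReal.inv_le_inv.2 hpq)
  simp only [hexp, ← ENNReal.toReal_inv]
  linarith

lemma hexp_nonneg {q : ℝ≥0∞} (hq : 1 ≤ q) : 0 ≤ hexp q := by
  have : q⁻¹.toReal ≤ (1 : ℝ≥0∞).toReal :=
    ENNReal.toReal_mono ENNReal.one_ne_top (ENNReal.inv_le_one.2 hq)
  simp only [hexp, ← ENNReal.toReal_inv]
  simpa using this

lemma hexp_le_one (q : ℝ≥0∞) : hexp q ≤ 1 := by
  simp only [hexp]
  linarith [inv_nonneg.2 (ENNReal.toReal_nonneg (a := q))]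

namespace ClassKL

variable {σ : ℝ → ℝ → ℝ}

lemma nonneg (hσ : ClassKL σ) {s t : ℝ} (hs : 0 ≤ s) (ht : 0 ≤ t) : 0 ≤ σ s t :=
  hσ.1 s t hs ht

lemma monotoneOn (hσ : ClassKL σ) {t : ℝ} (ht : 0 ≤ t) : MonotoneOn (σ · t) (Ici 0) :=
  (hσ.2.1 t ht).2.1.monotoneOn

lemma antitoneOn (hσ : ClassKL σ) {s : ℝ} (hs : 0 ≤ s) : AntitoneOn (σ s ·) (Ici 0) :=
  (hσ.2.2 s hs).1

lemma comp_mul_left (hσ : ClassKL σ) {C : ℝ} (hC : 0 < C) : ClassKL (fun s t => σ (C * s) t) := by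
  obtain ⟨hnonneg, hs, ht⟩ := hσ
  have hmaps : MapsTo (C * ·) (Ici 0) (Ici (0 : ℝ)) := fun s hs => mul_nonneg hC.le hs
  refine ⟨fun s t hs' ht' => hnonneg _ t (hmaps hs') ht', fun t ht' => ?_,
    fun s hs' => ht _ (hmaps hs')⟩
  obtain ⟨hcont, hmono, hzero⟩ := hs t ht'
  exact ⟨hcont.comp (continuousOn_const.mul continuousOn_id) hmaps,
    fun a ha b hb hab => hmono (hmaps ha) (hmaps hb) (mul_lt_mul_of_pos_left hab hC),
    by simpa using hzero⟩

lemma comp_delay (hσ : ClassKL σ) (r : ℝ) : ClassKL (fun s t => σ s (max (t - r) 0)) := by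
  obtain ⟨hnonneg, hs, ht⟩ := hσ
  refine ⟨fun s t hs' _ => hnonneg s _ hs' (le_max_right _ _),
    fun t _ => hs _ (le_max_right _ _), fun s hs' => ⟨?_, ?_⟩⟩
  · intro a _ b _ hab
    exact (ht s hs').1 (mem_Ici.2 (le_max_right _ _)) (mem_Ici.2 (le_max_right _ _)) (by gcongr)
  · refine (ht s hs').2.comp (tendsto_atTop_mono (fun t => le_max_left (t - r) 0) ?_)
    exact tendsto_atTop_add_const_right _ _ tendsto_id

lemma mul_left (hσ : ClassKL σ) {g : ℝ → ℝ} (hg : ContinuousOn g (Ici 0))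
    (hgm : MonotoneOn g (Ici 0)) (hgpos : ∀ s, 0 ≤ s → 0 < g s) :
    ClassKL (fun s t => g s * σ s t) := by
  obtain ⟨hnonneg, hs, ht⟩ := hσ
  refine ⟨fun s t hs' ht' => mul_nonneg (hgpos s hs').le (hnonneg s t hs' ht'),
    fun t ht' => ?_, fun s hs' => ?_⟩
  · obtain ⟨hcont, hmono, hzero⟩ := hs t ht'
    refine ⟨hg.mul hcont, fun a ha b hb hab => ?_, by simp [hzero]⟩
    calc g a * σ a t ≤ g b * σ a t := by
          gcongr
          · exact hnonneg a t ha ht'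
          · exact hgm ha hb hab.le
      _ < g b * σ b t := mul_lt_mul_of_pos_left (hmono ha hb hab) (hgpos b hb)
  · obtain ⟨hanti, hlim⟩ := ht s hs'
    exact ⟨fun a ha b hb hab => mul_le_mul_of_nonneg_left (hanti ha hb hab) (hgpos s hs').le,
      by simpa using hlim.const_mul (g s)⟩

lemma add_mul {θ : ℝ → ℝ} (hσ : ClassKL σ) (hθ : ∀ t, 0 ≤ t → 0 ≤ θ t) (hθm : Antitone θ)
    (hθlim : Tendsto θ atTop (𝓝 0)) : ClassKL (fun s t => σ s t + s * θ t) := by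
  obtain ⟨hnonneg, hs, ht⟩ := hσ
  refine ⟨fun s t hs' ht' => add_nonneg (hnonneg s t hs' ht') (mul_nonneg hs' (hθ t ht')),
    fun t ht' => ?_, fun s hs' => ?_⟩
  · obtain ⟨hcont, hmono, hzero⟩ := hs t ht'
    exact ⟨hcont.add (continuousOn_id.mul continuousOn_const),
      fun a ha b hb hab => add_lt_add_of_lt_of_le (hmono ha hb hab)
        (mul_le_mul_of_nonneg_right hab.le (hθ t ht')), by simp [hzero]⟩
  · obtain ⟨hanti, hlim⟩ := ht s hs'
    exact ⟨fun a ha b hb hab => add_le_add (hanti ha hb hab)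
        (mul_le_mul_of_nonneg_left (hθm hab) hs'),
      by simpa using hlim.add (hθlim.const_mul s)⟩

end ClassKL

/-- Averaging over a unit window turns the merely monotone Lipschitz modulus into a continuous
one, which keeps the `KL` bound continuous in its first argument. -/
def avgMajorant (L : ℝ → ℝ) (u : ℝ) : ℝ := ∫ w in (0 : ℝ)..1, L (u + w)

namespace Monotone

variable {L : ℝ → ℝ} (hL : Monotone L)
include hL

lemma continuous_avgMajorant : Continuous (avgMajorant L) := by
  have hprim : Continuous fun b => ∫ w in (0 : ℝ)..b, L w :=
    intervalIntegral.continuous_primitive (fun _ _ => hL.intervalIntegrable) 0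
  have heq : avgMajorant L = fun u => (∫ w in (0 : ℝ)..(u + 1), L w) - ∫ w in (0 : ℝ)..u, L w := by
    ext u
    rw [avgMajorant, intervalIntegral.integral_comp_add_left L u,
      intervalIntegral.integral_interval_sub_left hL.intervalIntegrable hL.intervalIntegrable,
      add_zero, add_comm]
  rw [heq]
  exact (hprim.comp (continuous_add_const 1)).sub hprim

lemma monotone_avgMajorant : Monotone (avgMajorant L) := fun u v huv =>
  intervalIntegral.integral_mono_on zero_le_one
    (hL.comp (monotone_id.const_add u)).intervalIntegrable
    (hL.comp (monotone_id.const_add v)).intervalIntegrable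
    (fun w _ => hL (by linarith))

lemma le_avgMajorant (u : ℝ) : L u ≤ avgMajorant L u := by
  have := intervalIntegral.integral_mono_on zero_le_one (intervalIntegrable_const (μ := volume))
    (hL.comp (monotone_id.const_add u)).intervalIntegrable
    (fun w (hw : w ∈ Icc 0 1) => hL (le_add_of_nonneg_right hw.1))
  simpa [avgMajorant] using this

end Monotone

lemma le_rpow_one_sub_mul_rpow {c r β : ℝ} (hc : 0 ≤ c) (hcr : c ≤ r) (hβ : β ≤ 1) :
    c ≤ r ^ (1 - β) * c ^ β := by
  rcases hc.eq_or_lt with rfl | hc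
  · exact mul_nonneg (Real.rpow_nonneg hcr _) (Real.rpow_nonneg le_rfl _)
  calc c = c ^ (1 - β) * c ^ β := by rw [← Real.rpow_add hc, sub_add_cancel, Real.rpow_one]
    _ ≤ r ^ (1 - β) * c ^ β := by gcongr

section Holder

variable {E : Type*} [SeminormedAddCommGroup E] {x : ℝ → E} {β : ℝ}

lemma holder_concat {M₁ M₂ a m b : ℝ} (hβ : 0 ≤ β) (hM₁ : 0 ≤ M₁) (hM₂ : 0 ≤ M₂)
    (h₁ : ∀ u v, a ≤ u → u < v → v ≤ m → ‖x v - x u‖ ≤ M₁ * (v - u) ^ β)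
    (h₂ : ∀ u v, m ≤ u → u < v → v ≤ b → ‖x v - x u‖ ≤ M₂ * (v - u) ^ β)
    {u v : ℝ} (hu : a ≤ u) (huv : u < v) (hv : v ≤ b) :
    ‖x v - x u‖ ≤ (M₁ + M₂) * (v - u) ^ β := by
  have hpow : 0 ≤ (v - u) ^ β := Real.rpow_nonneg (by linarith) _
  by_cases hvm : v ≤ m
  · exact (h₁ u v hu huv hvm).trans (by nlinarith)
  by_cases hmu : m ≤ u
  · exact (h₂ u v hmu huv hv).trans (by nlinarith)
  rw [not_le] at hvm hmu
  calc ‖x v - x u‖ ≤ ‖x v - x m‖ + ‖x m - x u‖ := norm_sub_le_norm_sub_add_norm_sub _ _ _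
    _ ≤ M₂ * (v - m) ^ β + M₁ * (m - u) ^ β :=
      add_le_add (h₂ m v le_rfl hvm hv) (h₁ u m hu hmu le_rfl)
    _ ≤ M₂ * (v - u) ^ β + M₁ * (v - u) ^ β := by gcongr
    _ = (M₁ + M₂) * (v - u) ^ β := by ring

lemma holder_window {r s₀ K t : ℝ} (hβ0 : 0 ≤ β) (hβ1 : β ≤ 1) (hs₀ : 0 ≤ s₀) (hK : 0 ≤ K)
    (ht : 0 ≤ t)
    (hinit : ∀ u v, -r ≤ u → u < v → v ≤ 0 → ‖x v - x u‖ ≤ s₀ * (v - u) ^ β)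
    (hlip : ∀ u v, max (t - r) 0 ≤ u → u < v → v ≤ t → ‖x v - x u‖ ≤ K * (v - u))
    {u v : ℝ} (hu : t - r ≤ u) (huv : u < v) (hv : v ≤ t) :
    ‖x v - x u‖ ≤ (s₀ * (if t < r then 1 else 0) + K * r ^ (1 - β)) * (v - u) ^ β := by
  have hlip' : ∀ u v, max (t - r) 0 ≤ u → u < v → v ≤ t →
      ‖x v - x u‖ ≤ K * r ^ (1 - β) * (v - u) ^ β := by
    intro u v hu huv hv
    rw [mul_assoc]
    refine (hlip u v hu huv hv).trans (mul_le_mul_of_nonneg_left ?_ hK)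
    exact le_rpow_one_sub_mul_rpow (by linarith) (by linarith [le_max_left (t - r) 0]) hβ1
  split_ifs with htr
  · rw [mul_one]
    have hmax : max (t - r) 0 = 0 := max_eq_right (by linarith)
    refine holder_concat hβ0 hs₀ (mul_nonneg hK (Real.rpow_nonneg (by linarith) _))
      (fun u v hu huv hv => hinit u v ?_ huv hv)
      (fun u v hu huv hv => hlip' u v (by rw [hmax]; exact hu) huv hv) hu huv hv
    linarith
  · rw [mul_zero, zero_add]
    exact hlip' u v (max_le hu (by linarith)) huv hv

end Holder

lemma ContinuousOn.memC0_seg {r s : ℝ} {x : ℝ → Vec n} (hx : ContinuousOn x (Ici (-r)))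
    (hs : 0 ≤ s) : MemC0 r (seg r x s) :=
  hx.comp (continuous_const_add s).continuousOn fun u hu => by
    simp only [mem_Ici]; linarith [hu.1]

lemma ContinuousOn.tendsto_supN_seg_sub {r t₀ : ℝ} (hr : 0 ≤ r) (ht₀ : 0 ≤ t₀) {x : ℝ → Vec n}
    (hx : ContinuousOn x (Ici (-r))) :
    Tendsto (fun t => supN r (seg r x t - seg r x t₀)) (𝓝[Ici 0] t₀) (𝓝 0) := by
  have hunif := isCompact_Icc.uniformContinuousOn_of_continuous
    (hx.mono (Icc_subset_Ici_self : Icc (-r) (t₀ + 1) ⊆ _))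
  rw [Metric.uniformContinuousOn_iff] at hunif
  rw [Metric.tendsto_nhdsWithin_nhds]
  intro ε hε
  obtain ⟨δ, hδ, hclose⟩ := hunif (ε / 2) (half_pos hε)
  refine ⟨min δ 1, lt_min hδ one_pos, fun t (ht : 0 ≤ t) hdist => ?_⟩
  rw [Real.dist_eq, abs_lt] at hdist
  have hwindow : ∀ s, 0 ≤ s → s < t₀ + 1 → ∀ u ∈ Icc (-r) 0, s + u ∈ Icc (-r) (t₀ + 1) :=
    fun s hs hst u hu => ⟨by linarith [hu.1], by linarith [hu.2]⟩
  have hsup : supN r (seg r x t - seg r x t₀) ≤ ε / 2 := by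
    refine supN_le hr fun u hu => ?_
    have := hclose _ (hwindow t ht (by linarith [min_le_right δ 1]) u hu) _
      (hwindow t₀ ht₀ (by linarith) u hu)
      (by rw [Real.dist_eq, add_sub_add_right_eq_sub, abs_lt]
          constructor <;> linarith [min_le_left δ 1])
    rw [dist_eq_norm] at this
    exact this.le
  rw [Real.dist_eq, sub_zero, abs_of_nonneg supN_nonneg]
  linarith

namespace GoodRHS

variable {r : ℝ} {f : (ℝ → Vec n) → Vec n} {L : ℝ → ℝ}

lemma monotone (hf : GoodRHS r f L) : Monotone L := hf.2.2.1

lemma nonneg (hf : GoodRHS r f L) (R : ℝ) : 0 ≤ L R := hf.2.2.2.1 R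

lemma norm_sub_le (hf : GoodRHS r f L) {R : ℝ} {g h : ℝ → Vec n} (hg : MemC0 r g)
    (hh : MemC0 r h) (hgR : supN r g ≤ R) (hhR : supN r h ≤ R) :
    ‖f g - f h‖ ≤ L R * supN r (g - h) :=
  hf.2.2.2.2 R g h hg hh hgR hhR

lemma norm_le (hf : GoodRHS r f L) {g : ℝ → Vec n} (hg : MemC0 r g) {R : ℝ}
    (hgR : supN r g ≤ R) : ‖f g‖ ≤ L R * R := by
  have hzero : supN r (0 : ℝ → Vec n) ≤ R := supN_zero.trans_le (supN_nonneg.trans hgR)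
  have := hf.norm_sub_le (h := 0) hg continuousOn_const hgR hzero
  rw [hf.1, sub_zero, sub_zero] at this
  exact this.trans (mul_le_mul_of_nonneg_left hgR (hf.nonneg R))

lemma continuousOn_comp_seg (hf : GoodRHS r f L) (hr : 0 ≤ r) {x : ℝ → Vec n}
    (hx : ContinuousOn x (Ici (-r))) : ContinuousOn (fun s => f (seg r x s)) (Ici 0) := by
  intro t₀ (ht₀ : 0 ≤ t₀)
  obtain ⟨M, hM⟩ := (isCompact_Icc.image_of_continuousOn
    (hx.mono (Icc_subset_Ici_self : Icc (-r) (t₀ + 1) ⊆ _)).norm).bddAbove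
  have hbound : ∀ s, 0 ≤ s → s ≤ t₀ + 1 → supN r (seg r x s) ≤ M :=
    fun s hs hst => supN_le hr fun u hu => hM ⟨s + u, ⟨by linarith [hu.1], by linarith [hu.2]⟩, rfl⟩
  have hnear : ∀ᶠ t in 𝓝[Ici 0] t₀,
      ‖f (seg r x t) - f (seg r x t₀)‖ ≤ L M * supN r (seg r x t - seg r x t₀) := by
    filter_upwards [self_mem_nhdsWithin, nhdsWithin_le_nhds (Iic_mem_nhds (lt_add_one t₀))]
      with t (ht : 0 ≤ t) (htT : t ≤ t₀ + 1)
    exact hf.norm_sub_le (hx.memC0_seg ht) (hx.memC0_seg ht₀) (hbound t ht htT)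
      (hbound t₀ ht₀ (by linarith))
  rw [ContinuousWithinAt, tendsto_iff_norm_sub_tendsto_zero]
  refine squeeze_zero' (Eventually.of_forall fun _ => norm_nonneg _) hnear ?_
  simpa using (hx.tendsto_supN_seg_sub hr ht₀).const_mul (L M)

end GoodRHS

namespace IsSol

variable {r : ℝ} {f : (ℝ → Vec n) → Vec n} {L : ℝ → ℝ} {x0 x : ℝ → Vec n}

lemma continuousOn (hx : IsSol r f x0 x ⊤) : ContinuousOn x (Ici (-r)) :=
  hx.1.mono fun _ ht => ⟨ht, ENNReal.ofReal_lt_top⟩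

lemma sub_eq_integral (hf : GoodRHS r f L) (hr : 0 ≤ r) (hx : IsSol r f x0 x ⊤) {u v : ℝ}
    (hu : 0 ≤ u) (hv : 0 ≤ v) : x v - x u = ∫ s in u..v, f (seg r x s) := by
  have hint : ∀ b, 0 ≤ b → IntervalIntegrable (fun s => f (seg r x s)) volume 0 b :=
    fun b hb => ((hf.continuousOn_comp_seg hr hx.continuousOn).mono
      (by rw [uIcc_of_le hb]; exact Icc_subset_Ici_self)).intervalIntegrable
  rw [hx.2.2 v hv ENNReal.ofReal_lt_top, hx.2.2 u hu ENNReal.ofReal_lt_top,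
    ← intervalIntegral.integral_interval_sub_left (hint v hv) (hint u hu)]
  abel

lemma norm_sub_le (hf : GoodRHS r f L) (hr : 0 ≤ r) (hx : IsSol r f x0 x ⊤) {u v R : ℝ}
    (hu : 0 ≤ u) (huv : u ≤ v) (hR : ∀ s ∈ Icc u v, supN r (seg r x s) ≤ R) :
    ‖x v - x u‖ ≤ L R * R * (v - u) := by
  rw [hx.sub_eq_integral hf hr hu (hu.trans huv), ← abs_of_nonneg (sub_nonneg.2 huv)]
  refine intervalIntegral.norm_integral_le_of_norm_le_const fun s hs => ?_
  rw [uIoc_of_le huv] at hs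
  exact hf.norm_le (hx.continuousOn.memC0_seg (hu.trans hs.1.le)) (hR s ⟨hs.1.le, hs.2⟩)

lemma holderNorm_seg_le {β t : ℝ} {B : ℝ → ℝ} (hf : GoodRHS r f L) (hr : 0 < r) (hβ0 : 0 ≤ β)
    (hβ1 : β ≤ 1) (hx0 : MemHol r β x0) (hx : IsSol r f x0 x ⊤)
    (hB : ∀ u, 0 ≤ u → supN r (seg r x u) ≤ B u) (hBanti : AntitoneOn B (Ici 0)) (ht : 0 ≤ t) :
    holderNorm r β (seg r x t) ≤ max (B (max (t - r) 0))
      (holderNorm r β x0 * (if t < r then 1 else 0) +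
        L (B (max (t - r) 0)) * B (max (t - r) 0) * r ^ (1 - β)) := by
  set R := B (max (t - r) 0)
  have hBR : ∀ u, max (t - r) 0 ≤ u → supN r (seg r x u) ≤ R := fun u hu =>
    (hB u ((le_max_right _ _).trans hu)).trans (hBanti (mem_Ici.2 (le_max_right _ _))
      (mem_Ici.2 ((le_max_right _ _).trans hu)) hu)
  have hR : 0 ≤ R := supN_nonneg.trans (hBR t (max_le (by linarith) ht))
  have hinit : ∀ u v, -r ≤ u → u < v → v ≤ 0 →
      ‖x v - x u‖ ≤ holderNorm r β x0 * (v - u) ^ β := by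
    intro u v hu huv hv
    have hu' : u ∈ Icc (-r) 0 := ⟨hu, by linarith⟩
    have hv' : v ∈ Icc (-r) 0 := ⟨by linarith, hv⟩
    rw [hx.2.1 hu', hx.2.1 hv']
    exact hx0.norm_sub_le hu' hv' huv
  have hlip : ∀ u v, max (t - r) 0 ≤ u → u < v → v ≤ t → ‖x v - x u‖ ≤ L R * R * (v - u) :=
    fun u v hu huv _ => hx.norm_sub_le hf hr.le ((le_max_right _ _).trans hu) huv.le
      fun s hs => hBR s (hu.trans hs.1)
  refine max_le_max (hBR t (max_le (by linarith) ht)) (sSup_hRatios_le hr fun u hu v hv huv => ?_)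
  have := holder_window hβ0 hβ1 holderNorm_nonneg (mul_nonneg (hf.nonneg R) hR) ht hinit hlip
    (by linarith [hu.1] : t - r ≤ t + u) (add_lt_add_right huv t) (by linarith [hv.2])
  rwa [add_sub_add_left_eq_sub] at this

end IsSol

/-- `C` is the embedding constant of `C^{0,β}` into the coarser Hölder space and
`c = r ^ (1 - β)`. -/
def holderKL (σ : ℝ → ℝ → ℝ) (L : ℝ → ℝ) (C r c : ℝ) (s t : ℝ) : ℝ :=
  (1 + avgMajorant L (σ (C * s) 0) * c) * σ (C * s) (max (t - r) 0) +
    s * (if t < r then 1 else 0)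

lemma ClassKL.holderKL {σ : ℝ → ℝ → ℝ} {L : ℝ → ℝ} {C c : ℝ} (hσ : ClassKL σ) (hC : 0 < C)
    (hL : Monotone L) (hL0 : ∀ u, 0 ≤ L u) (r : ℝ) (hc : 0 ≤ c) :
    ClassKL (holderKL σ L C r c) := by
  have hσC := hσ.comp_mul_left hC
  set g := fun s => 1 + avgMajorant L (σ (C * s) 0) * c
  have hg : ContinuousOn g (Ici 0) := continuousOn_const.add
    ((hL.continuous_avgMajorant.comp_continuousOn (hσC.2.1 0 le_rfl).1).mul continuousOn_const)
  have hgm : MonotoneOn g (Ici 0) := fun a ha b hb hab => add_le_add_right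
    (mul_le_mul_of_nonneg_right (hL.monotone_avgMajorant (hσC.monotoneOn le_rfl ha hb hab)) hc) 1
  have hgpos : ∀ s, 0 ≤ s → 0 < g s := fun s _ => by
    have := (hL0 _).trans (hL.le_avgMajorant (σ (C * s) 0)); positivity
  set θ := fun t : ℝ => if t < r then (1 : ℝ) else 0
  have hθm : Antitone θ := fun a b hab => by simp only [θ]; split_ifs <;> linarith
  have hθlim : Tendsto θ atTop (𝓝 0) := tendsto_const_nhds.congr'
    (eventually_atTop.2 ⟨r, fun t ht => (if_neg (not_lt.2 ht)).symm⟩)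
  exact ((hσC.comp_delay r).mul_left hg hgm hgpos).add_mul (fun t _ => by positivity) hθm hθlim

lemma IsSol.holderNorm_seg_le_holderKL {r β C : ℝ} {f : (ℝ → Vec n) → Vec n} {L : ℝ → ℝ}
    {σ : ℝ → ℝ → ℝ} {x0 x : ℝ → Vec n} (hf : GoodRHS r f L) (hr : 0 < r) (hβ0 : 0 ≤ β)
    (hβ1 : β ≤ 1) (hσ : ClassKL σ) (hC : 0 < C) (hx0 : MemHol r β x0) (hx : IsSol r f x0 x ⊤)
    (hB : ∀ u, 0 ≤ u → supN r (seg r x u) ≤ σ (C * holderNorm r β x0) u) {t : ℝ} (ht : 0 ≤ t) :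
    holderNorm r β (seg r x t) ≤ holderKL σ L C r (r ^ (1 - β)) (holderNorm r β x0) t := by
  set s₀ := holderNorm r β x0
  have hs₀ : 0 ≤ C * s₀ := mul_nonneg hC.le holderNorm_nonneg
  refine (hx.holderNorm_seg_le hf hr hβ0 hβ1 hx0 hB (hσ.antitoneOn hs₀) ht).trans ?_
  set R := σ (C * s₀) (max (t - r) 0)
  set θ : ℝ := if t < r then 1 else 0
  set ℓ := avgMajorant L (σ (C * s₀) 0)
  have hR : 0 ≤ R := hσ.nonneg hs₀ (le_max_right _ _)
  have hrβ : 0 ≤ r ^ (1 - β) := Real.rpow_nonneg hr.le _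
  have hLR : L R ≤ ℓ := (hf.monotone.le_avgMajorant R).trans (hf.monotone.monotone_avgMajorant
    (hσ.antitoneOn hs₀ self_mem_Ici (mem_Ici.2 (le_max_right _ _)) (le_max_right _ _)))
  have hθ : 0 ≤ s₀ * θ := mul_nonneg holderNorm_nonneg (by positivity)
  have hℓ : 0 ≤ ℓ * r ^ (1 - β) * R := mul_nonneg (mul_nonneg ((hf.nonneg R).trans hLR) hrβ) hR
  change max R (s₀ * θ + L R * R * r ^ (1 - β)) ≤ (1 + ℓ * r ^ (1 - β)) * R + s₀ * θ
  apply max_le <;> nlinarith [mul_le_mul_of_nonneg_right hLR (mul_nonneg hR hrβ)]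

theorem stmt6_general (n : ℕ) (r : ℝ) (hr : 0 < r)
    (f : (ℝ → Vec n) → Vec n) (L : ℝ → ℝ) (hf : GoodRHS r f L)
    (p q : ℝ≥0∞) (hp : 1 < p) (hpq : p ≤ q)
    (σ : ℝ → ℝ → ℝ) (hσ : ClassKL σ)
    (hUG : ∀ x0 x : ℝ → Vec n, MemHol r (hexp p) x0 → IsSol r f x0 x ⊤ →
      ∀ t : ℝ, 0 ≤ t → holderNorm r (hexp p) (seg r x t) ≤ σ (holderNorm r (hexp p) x0) t) :
    ∃ ω : ℝ → ℝ → ℝ, ClassKL ω ∧ ∀ x0 x : ℝ → Vec n, MemHol r (hexp q) x0 →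
      IsSol r f x0 x ⊤ →
      ∀ t : ℝ, 0 ≤ t → holderNorm r (hexp q) (seg r x t) ≤ ω (holderNorm r (hexp q) x0) t := by
  have hαβ : hexp p ≤ hexp q := hexp_le_hexp (zero_lt_one.trans hp).ne' hpq
  set C := max 1 (r ^ (hexp q - hexp p))
  have hC : 0 < C := one_pos.trans_le (le_max_left _ _)
  refine ⟨holderKL σ L C r (r ^ (1 - hexp q)),
    hσ.holderKL hC hf.monotone hf.nonneg r (Real.rpow_nonneg hr.le _), ?_⟩
  intro x0 x hx0 hx t ht
  obtain ⟨hx0α, hembed⟩ := hx0.of_exponent_le hr hαβ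
  have hB : ∀ u, 0 ≤ u → supN r (seg r x u) ≤ σ (C * holderNorm r (hexp q) x0) u := fun u hu =>
    supN_le_holderNorm.trans ((hUG x0 x hx0α hx u hu).trans
      (hσ.monotoneOn hu holderNorm_nonneg (mul_nonneg hC.le holderNorm_nonneg) hembed))
  exact hx.holderNorm_seg_le_holderKL hf hr (hexp_nonneg (hp.le.trans hpq)) (hexp_le_one q) hσ hC
    hx0 hB ht

/-- UGAS in `C^{0,1-1/p}` implies UGAS in `C^{0,1-1/q}` for
`1 < p ≤ q ≤ ∞`, for a forward-complete system on `C⁰`. -/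
theorem stmt6 (n : ℕ) (hn : 1 ≤ n) (r : ℝ) (hr : 0 < r)
    (f : (ℝ → Vec n) → Vec n) (L : ℝ → ℝ) (hf : GoodRHS r f L)
    (p q : ℝ≥0∞) (hp : 1 < p) (hpq : p ≤ q)
    (hFC : ∀ x0 : ℝ → Vec n, MemC0 r x0 → ∃ x : ℝ → Vec n, IsSol r f x0 x ⊤)
    (σ : ℝ → ℝ → ℝ) (hσ : ClassKL σ)
    (hUG : ∀ x0 x : ℝ → Vec n, MemHol r (hexp p) x0 → IsSol r f x0 x ⊤ →
      ∀ t : ℝ, 0 ≤ t → holderNorm r (hexp p) (seg r x t) ≤ σ (holderNorm r (hexp p) x0) t) :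
    ∃ ω : ℝ → ℝ → ℝ, ClassKL ω ∧ ∀ x0 x : ℝ → Vec n, MemHol r (hexp q) x0 →
      IsSol r f x0 x ⊤ →
      ∀ t : ℝ, 0 ≤ t → holderNorm r (hexp q) (seg r x t) ≤ ω (holderNorm r (hexp q) x0) t :=
  stmt6_general n r hr f L hf p q hp hpq σ hσ hUG
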